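/- Let k be an algebraically closed field of characteristic ≠ 2, and f = f₁⋯fₙ a square-free product of n ≥ 3 linear forms fᵢ = aᵢx + bᵢy in k[x,y]. Then T = k[x,y,z]/(z² − f) is an integral domain that is a free k[x,y]-module of rank 2 and is integrally closed in its field of fractions. -/

import Mathlib

/-!
Since `f` is squarefree and not a unit, it is not a square in `K = Frac k[x,y]`, so `z² - f` is
irreducible over the UFD `k[x,y]` and `T` is a domain, free on `1, z`. Every element of `Frac T` is
`p + q z` with `p, q ∈ K`, and when `q ≠ 0` its minimal polynomial over `K` is
`X² - 2p X + (p² - q² f)`. If it is integral, these coefficients lie in the integrally closed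
`k[x,y]`, so `p ∈ k[x,y]` because `2` is invertible, and then `q² f ∈ k[x,y]` forces
`q ∈ k[x,y]` because `f` is squarefree.
-/

section Squarefree

variable {R K : Type*} [CommRing R] [Field K] [Algebra R K] [IsFractionRing R K]

theorem not_isSquare_algebraMap_of_squarefree [IsIntegrallyClosed R] {f : R} (hsf : Squarefree f)
    (hu : ¬IsUnit f) : ¬IsSquare (algebraMap R K f) := by
  rintro ⟨c, hc⟩
  have hint : IsIntegral R c :=
    .of_pow two_pos (by rw [sq, ← hc]; exact isIntegral_algebraMap)
  obtain ⟨r, rfl⟩ := IsIntegrallyClosed.isIntegral_iff.mp hint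
  have hrf : r * r = f := IsFractionRing.injective R K (by rw [map_mul, hc])
  exact hu (hrf ▸ (hsf r hrf.dvd).mul (hsf r hrf.dvd))

theorem exists_algebraMap_eq_of_sq_mul_squarefree [IsDomain R] [UniqueFactorizationMonoid R]
    {f s : R} (hsf : Squarefree f) {q : K} (h : q ^ 2 * algebraMap R K f = algebraMap R K s) :
    ∃ r : R, algebraMap R K r = q := by
  obtain ⟨c, d, hcd, rfl⟩ := IsFractionRing.exists_reduced_fraction R q
  have hspec := IsLocalization.mk'_spec K c d
  have hdvd : (d : R) * d ∣ c * c * f := by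
    refine ⟨s, IsFractionRing.injective R K ?_⟩
    simp only [map_mul, ← h, ← hspec]
    ring
  have hrel : IsRelPrime ((d : R) * d) (c * c) :=
    (hcd.symm.mul_left hcd.symm).mul_right (hcd.symm.mul_left hcd.symm)
  obtain ⟨u, hu⟩ := hsf d (hrel.dvd_of_dvd_mul_left hdvd)
  refine ⟨c * ↑u⁻¹, (IsLocalization.mk'_eq_iff_eq_mul.mpr ?_).symm⟩
  rw [← map_mul, ← hu, mul_assoc, Units.inv_mul, mul_one]

end Squarefree

section Quadratic

open Polynomial

theorem minpoly_add_mul_of_sq_eq {K L : Type*} [Field K] [Field L] [Algebra K L] {θ : L}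
    {c p q : K} (hθ : θ ^ 2 = algebraMap K L c)
    (hx : algebraMap K L p + algebraMap K L q * θ ∉ (algebraMap K L).range) :
    minpoly K (algebraMap K L p + algebraMap K L q * θ) =
      X ^ 2 - C (2 * p) * X + C (p ^ 2 - q ^ 2 * c) := by
  set P : K[X] := X ^ 2 - C (2 * p) * X + C (p ^ 2 - q ^ 2 * c)
  have hmonic : P.Monic := by simp only [P]; monicity!
  have hroot : aeval (algebraMap K L p + algebraMap K L q * θ) P = 0 := by
    simp only [P, map_add, map_sub, map_mul, map_pow, aeval_X, aeval_C, map_ofNat]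
    linear_combination (algebraMap K L q) ^ 2 * hθ
  have hint : IsIntegral K (algebraMap K L p + algebraMap K L q * θ) := ⟨P, hmonic, hroot⟩
  refine (minpoly.unique_of_degree_le_degree_minpoly K _ hmonic hroot ?_).symm
  rw [degree_eq_natDegree (minpoly.ne_zero hint)]
  calc P.degree ≤ ((2 : ℕ) : WithBot ℕ) := by simp only [P]; compute_degree!
    _ ≤ _ := by exact_mod_cast (minpoly.two_le_natDegree_iff hint).mpr hx

variable {R K L : Type*} [CommRing R] [IsDomain R] [UniqueFactorizationMonoid R] [Field K]
  [Field L] [Algebra R K] [IsFractionRing R K] [Algebra K L] [Algebra R L] [IsScalarTower R K L]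

theorem mem_range_of_isIntegral_add_mul_sqrt {f : R} (h2 : IsUnit (2 : R)) (hsf : Squarefree f)
    {θ : L} (hθ : θ ^ 2 = algebraMap R L f) (hθK : θ ∉ (algebraMap K L).range) {p q : K}
    (hx : IsIntegral R (algebraMap K L p + algebraMap K L q * θ)) :
    p ∈ (algebraMap R K).range ∧ q ∈ (algebraMap R K).range := by
  by_cases hq : q = 0
  · subst hq
    rw [map_zero, zero_mul, add_zero, isIntegral_algebraMap_iff (algebraMap K L).injective] at hx
    exact ⟨IsIntegrallyClosed.isIntegral_iff.mp hx, zero_mem _⟩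
  have hxK : algebraMap K L p + algebraMap K L q * θ ∉ (algebraMap K L).range := by
    rintro ⟨c, hc⟩
    refine hθK ⟨(c - p) / q, ?_⟩
    rw [map_div₀, map_sub, hc, div_eq_iff ((_root_.map_ne_zero _).mpr hq)]
    ring
  have hmin := minpoly_add_mul_of_sq_eq (c := algebraMap R K f)
    (by rw [hθ, IsScalarTower.algebraMap_apply R K L]) hxK
  -- `R` is integrally closed, so the minimal polynomial over `K` of an element integral over `R`
  -- has its coefficients in `R`.
  have hcoeff (i : ℕ) : (X ^ 2 - C (2 * p) * X +
      C (p ^ 2 - q ^ 2 * algebraMap R K f)).coeff i ∈ (algebraMap R K).range := by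
    rw [← hmin, minpoly.isIntegrallyClosed_eq_field_fractions' K hx, coeff_map]
    exact ⟨_, rfl⟩
  have hp : p ∈ (algebraMap R K).range := by
    have h2p : 2 * p ∈ (algebraMap R K).range := by
      simpa [coeff_X, coeff_C, -map_sub, -map_pow, -map_mul] using neg_mem (hcoeff 1)
    have : p = algebraMap R K ↑h2.unit⁻¹ * (2 * p) := by
      rw [← mul_assoc, ← map_ofNat (algebraMap R K) 2, ← map_mul,
        Units.inv_mul_of_eq h2.unit_spec, map_one, one_mul]
    exact this ▸ mul_mem ⟨_, rfl⟩ h2p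
  have hqf : q ^ 2 * algebraMap R K f ∈ (algebraMap R K).range := by
    have h0 : p ^ 2 - q ^ 2 * algebraMap R K f ∈ (algebraMap R K).range := by
      simpa [coeff_X, coeff_C, -map_sub, -map_pow, -map_mul] using hcoeff 0
    simpa using sub_mem (pow_mem hp 2) h0
  obtain ⟨s, hs⟩ := hqf
  exact ⟨hp, exists_algebraMap_eq_of_sq_mul_squarefree hsf hs.symm⟩

end Quadratic

theorem IsFractionRing.exists_mul_algebraMap_eq_of_isIntegral {R T L : Type*} [CommRing R]
    [Nontrivial R] [CommRing T] [IsDomain T] [Field L] [Algebra R T] [Algebra T L] [Algebra R L]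
    [IsScalarTower R T L] [IsFractionRing T L] [Algebra.IsIntegral R T] (x : L) :
    ∃ r : R, r ≠ 0 ∧ ∃ t : T, x * algebraMap R L r = algebraMap T L t := by
  obtain ⟨t, s, hs, rfl⟩ := IsFractionRing.div_surjective T x
  -- A nonzero element integral over `R` divides a nonzero element of `R`.
  obtain ⟨r, hr, hr0⟩ := Submodule.exists_mem_ne_zero_of_ne_bot
    (Ideal.comap_ne_bot_of_integral_mem (nonZeroDivisors.ne_zero hs)
      (Ideal.mem_span_singleton_self s) (Algebra.IsIntegral.isIntegral (R := R) s))
  obtain ⟨c, hc⟩ := Ideal.mem_span_singleton'.mp (Ideal.mem_comap.mp hr)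
  refine ⟨r, hr0, t * c, ?_⟩
  rw [IsScalarTower.algebraMap_apply R T L, ← hc, map_mul, map_mul, div_mul_eq_mul_div,
    div_eq_iff (IsFractionRing.to_map_ne_zero_of_mem_nonZeroDivisors hs)]
  ring

section AdjoinRoot

open Polynomial

theorem AdjoinRoot.exists_eq_add_mul_root {R : Type*} [CommRing R] {g : R[X]} (hg : g.Monic)
    (hdeg : g.natDegree = 2) (t : AdjoinRoot g) :
    ∃ u v : R, t = algebraMap R _ u + algebraMap R _ v * root g := by
  obtain ⟨p, rfl⟩ := mk_surjective t
  have hp : (p %ₘ g).natDegree ≤ 1 := by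
    have := natDegree_modByMonic_lt p hg (by rintro rfl; simp at hdeg)
    omega
  refine ⟨(p %ₘ g).coeff 0, (p %ₘ g).coeff 1, ?_⟩
  rw [← mk_leftInverse hg (mk g p), modByMonicHom_mk, eq_X_add_C_of_natDegree_le_one hp]
  simp [add_comm]

theorem AdjoinRoot.exists_eq_add_mul_root_of_isFractionRing {R K L : Type*} [CommRing R]
    [IsDomain R] [Field K] [Field L] [Algebra R K] [IsFractionRing R K] {g : R[X]} (hg : g.Monic)
    (hdeg : g.natDegree = 2) [IsDomain (AdjoinRoot g)] [Algebra (AdjoinRoot g) L]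
    [IsFractionRing (AdjoinRoot g) L] [Algebra R L] [IsScalarTower R (AdjoinRoot g) L]
    [Algebra K L] [IsScalarTower R K L] (x : L) :
    ∃ p q : K, x = algebraMap K L p + algebraMap K L q * algebraMap _ L (root g) := by
  have := (powerBasis' hg).finite
  obtain ⟨r, hr0, t, hxt⟩ :=
    IsFractionRing.exists_mul_algebraMap_eq_of_isIntegral (R := R) (T := AdjoinRoot g) x
  obtain ⟨u, v, rfl⟩ := exists_eq_add_mul_root hg hdeg t
  have hrL : algebraMap R L r ≠ 0 := by
    rw [IsScalarTower.algebraMap_apply R K L]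
    exact (_root_.map_ne_zero _).mpr (IsFractionRing.to_map_ne_zero_of_mem_nonZeroDivisors
      (mem_nonZeroDivisors_of_ne_zero hr0))
  refine ⟨algebraMap R K u / algebraMap R K r, algebraMap R K v / algebraMap R K r, ?_⟩
  simp only [map_div₀, ← IsScalarTower.algebraMap_apply]
  rw [eq_comm, div_mul_eq_mul_div, ← add_div, div_eq_iff hrL, hxt]
  simp only [map_add, map_mul, ← IsScalarTower.algebraMap_apply]

variable {R : Type*} [CommRing R] [IsDomain R]

theorem irreducible_X_sq_sub_C [IsIntegrallyClosed R] {f : R} (hsf : Squarefree f)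
    (hu : ¬IsUnit f) : Irreducible (X ^ 2 - C f : R[X]) := by
  rw [(monic_X_pow_sub_C f two_ne_zero).irreducible_iff_irreducible_map_fraction_map
    (K := FractionRing R)]
  simp only [Polynomial.map_sub, Polynomial.map_pow, map_X, map_C]
  exact X_pow_sub_C_irreducible_of_prime Nat.prime_two fun b hb =>
    not_isSquare_algebraMap_of_squarefree hsf hu ⟨b, by rw [← hb, sq]⟩

variable [UniqueFactorizationMonoid R] {f : R}

theorem isDomain_adjoinRoot_X_sq_sub_C (hsf : Squarefree f) (hu : ¬IsUnit f) :
    IsDomain (AdjoinRoot (X ^ 2 - C f : R[X])) :=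
  AdjoinRoot.isDomain_of_prime (irreducible_X_sq_sub_C hsf hu).prime

theorem isIntegrallyClosed_adjoinRoot_X_sq_sub_C (h2 : IsUnit (2 : R)) (hsf : Squarefree f)
    (hu : ¬IsUnit f) : IsIntegrallyClosed (AdjoinRoot (X ^ 2 - C f : R[X])) := by
  set g : R[X] := X ^ 2 - C f
  have hg : g.Monic := monic_X_pow_sub_C f two_ne_zero
  have := isDomain_adjoinRoot_X_sq_sub_C hsf hu
  have := (AdjoinRoot.powerBasis' hg).finite
  have : FaithfulSMul R (AdjoinRoot g) := (faithfulSMul_iff_algebraMap_injective _ _).mpr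
    (AdjoinRoot.of.injective_of_degree_ne_zero (by simp [g, degree_X_pow_sub_C]))
  set L := FractionRing (AdjoinRoot g)
  have : FaithfulSMul R L := FaithfulSMul.trans R (AdjoinRoot g) L
  let _ : Algebra (FractionRing R) L := FractionRing.liftAlgebra R L
  set θ := algebraMap (AdjoinRoot g) L (AdjoinRoot.root g)
  have hθ : θ ^ 2 = algebraMap R L f := by
    have hroot : AdjoinRoot.root g ^ 2 - algebraMap R _ f = 0 := by
      simpa [g] using AdjoinRoot.eval₂_root g
    rw [IsScalarTower.algebraMap_apply R (AdjoinRoot g) L, ← sub_eq_zero.mp hroot, map_pow]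
  have hθK : θ ∉ (algebraMap (FractionRing R) L).range := by
    rintro ⟨c, hc⟩
    refine not_isSquare_algebraMap_of_squarefree hsf hu ⟨c, (algebraMap _ L).injective ?_⟩
    rw [← IsScalarTower.algebraMap_apply, ← hθ, ← hc, map_mul, sq]
  rw [isIntegrallyClosed_iff L]
  intro x hx
  obtain ⟨p, q, rfl⟩ :=
    AdjoinRoot.exists_eq_add_mul_root_of_isFractionRing (K := FractionRing R) hg
      natDegree_X_pow_sub_C x
  obtain ⟨⟨a, rfl⟩, ⟨b, rfl⟩⟩ :=
    mem_range_of_isIntegral_add_mul_sqrt h2 hsf hθ hθK (isIntegral_trans _ hx)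
  refine ⟨algebraMap R _ a + algebraMap R _ b * AdjoinRoot.root g, ?_⟩
  simp only [map_add, map_mul, ← IsScalarTower.algebraMap_apply]

end AdjoinRoot

open MvPolynomial

theorem double_plane_domain_free_integrally_closed_general
    (k : Type) [Field k] (hchar : (2 : k) ≠ 0)
    (n : ℕ) (hn : 3 ≤ n) (a b : Fin n → k)
    (f : MvPolynomial (Fin 2) k)
    (hf : f = ∏ i, (C (a i) * X 0 + C (b i) * X 1))
    (hsf : Squarefree f) :
    IsDomain (AdjoinRoot (Polynomial.X ^ 2 - Polynomial.C f)) ∧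
    IsIntegrallyClosed (AdjoinRoot (Polynomial.X ^ 2 - Polynomial.C f)) ∧
    Module.Free (MvPolynomial (Fin 2) k) (AdjoinRoot (Polynomial.X ^ 2 - Polynomial.C f)) ∧
    Module.finrank (MvPolynomial (Fin 2) k) (AdjoinRoot (Polynomial.X ^ 2 - Polynomial.C f))
      = 2 := by
  have hu : ¬IsUnit f := fun h => by
    simpa [hf, zero_pow (by omega : n ≠ 0)] using h.map constantCoeff
  have h2 : IsUnit (2 : MvPolynomial (Fin 2) k) := by
    rw [← map_ofNat C 2]
    exact hchar.isUnit.map C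
  let pb := AdjoinRoot.powerBasis' (Polynomial.monic_X_pow_sub_C f two_ne_zero)
  exact ⟨isDomain_adjoinRoot_X_sq_sub_C hsf hu,
    isIntegrallyClosed_adjoinRoot_X_sq_sub_C h2 hsf hu, .of_basis pb.basis,
    pb.finrank.trans Polynomial.natDegree_X_pow_sub_C⟩

/-- Let `k` be an algebraically closed field of characteristic ≠ 2, and
`f = f₁⋯fₙ` a square-free product of `n ≥ 3` linear forms `fᵢ = aᵢx + bᵢy` in `k[x,y]`.
Then `T = k[x,y,z]/(z² − f)` is an integral domain that is a free `k[x,y]`-module of rank 2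
and is integrally closed in its field of fractions. -/
theorem double_plane_domain_free_integrally_closed
    (k : Type) [Field k] [IsAlgClosed k] (hchar : (2 : k) ≠ 0)
    (n : ℕ) (hn : 3 ≤ n) (a b : Fin n → k)
    (f : MvPolynomial (Fin 2) k)
    (hf : f = ∏ i, (C (a i) * X 0 + C (b i) * X 1))
    (hsf : Squarefree f) :
    IsDomain (AdjoinRoot (Polynomial.X ^ 2 - Polynomial.C f)) ∧
    IsIntegrallyClosed (AdjoinRoot (Polynomial.X ^ 2 - Polynomial.C f)) ∧
    Module.Free (MvPolynomial (Fin 2) k) (AdjoinRoot (Polynomial.X ^ 2 - Polynomial.C f)) ∧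
    Module.finrank (MvPolynomial (Fin 2) k) (AdjoinRoot (Polynomial.X ^ 2 - Polynomial.C f))
      = 2 :=
  double_plane_domain_free_integrally_closed_general k hchar n hn a b f hf hsf
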